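/- Let n ≥ 3. Let ∼ be the equivalence relation on ℝ^{n−1}∖{0} given by X ∼ Y iff Y = r·𝓜^m(X) for some r ∈ ℝ∖{0} and some m ∈ ℤ, and let ≈ be the equivalence relation on the unit sphere S^{n−2} ⊆ ℝ^{n−1} given by X ≈ Y iff Y = ±ℛ_n^m X for some m ∈ ℤ. Then the quotient space (ℝ^{n−1}∖{0})/∼ is homeomorphic to the quotient space S^{n−2}/≈ (both with the quotient topology). (The left-hand quotient is the space 𝓛(n) of shapes of n-segments without labelled vertices; the theorem says 𝓛(n) ≅ S^{n−2}/⟨ℛ_n, ν⟩ with ν(X) = −X.) -/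

import Mathlib

noncomputable section

/-- The `(n-1) × (n-1)` real matrix of the linear map
`𝓜(x₁,…,x_{n-1}) = (x₂ − x₁, …, x_{n-1} − x₁, −x₁)` in the standard basis. -/
def Mmat (n : ℕ) : Matrix (Fin (n - 1)) (Fin (n - 1)) ℝ :=
  Matrix.of fun i j =>
    (if (j : ℕ) = (i : ℕ) + 1 then (1 : ℝ) else 0) - (if (j : ℕ) = 0 then 1 else 0)

/-- The block-rotation matrix `ℛ_n`: block diagonal with `2 × 2` rotation blocks
`R_{2π/n}, R_{2·2π/n}, …` (the block with index `b` rotates by `(b+1)·2π/n`), followed,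
when `n` is even, by a final `1 × 1` entry `−1`. -/
def Rmat (n : ℕ) : Matrix (Fin (n - 1)) (Fin (n - 1)) ℝ :=
  Matrix.of fun i j =>
    let b : ℕ := (i : ℕ) / 2
    let θ : ℝ := 2 * Real.pi * ((b : ℝ) + 1) / n
    if (i : ℕ) % 2 = 0 then
      if (i : ℕ) + 1 < n - 1 then
        if (j : ℕ) = (i : ℕ) then Real.cos θ
        else if (j : ℕ) = (i : ℕ) + 1 then -Real.sin θ else 0
      else
        if j = i then -1 else 0
    else
      if (j : ℕ) = (i : ℕ) - 1 then Real.sin θ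
      else if (j : ℕ) = (i : ℕ) then Real.cos θ else 0

/-- The relation `X ∼ Y` on `ℝ^{n-1} ∖ {0}`: `Y = r·𝓜^m(X)` for some `r ∈ ℝ∖{0}`, `m ∈ ℤ`. -/
def simRel (n : ℕ) (X Y : {v : Fin (n - 1) → ℝ // v ≠ 0}) : Prop :=
  ∃ (r : ℝ) (m : ℤ), r ≠ 0 ∧ (Y : Fin (n - 1) → ℝ) = r • ((Mmat n ^ m).mulVec X)

/-- The relation `X ≈ Y` on the unit sphere `S^{n-2} ⊆ ℝ^{n-1}`: `Y = ±ℛ_n^m X`, `m ∈ ℤ`. -/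
def apxRel (n : ℕ) (X Y : {v : Fin (n - 1) → ℝ // ∑ i, (v i) ^ 2 = 1}) : Prop :=
  ∃ (m : ℤ) (ε : ℝ), (ε = 1 ∨ ε = -1) ∧
    (Y : Fin (n - 1) → ℝ) = ε • ((Rmat n ^ m).mulVec X)


open Finset

lemma exp_sum (n : ℕ) (hn : 0 < n) (m : ℤ) :
    ∑ l ∈ Finset.range n, Complex.exp ((2 * Real.pi * m * l / n : ℝ) * Complex.I) =
      if (n : ℤ) ∣ m then (n : ℂ) else 0 := by
  have hn0 : (n : ℂ) ≠ 0 := Nat.cast_ne_zero.2 hn.ne'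
  have hnr : (n : ℝ) ≠ 0 := Nat.cast_ne_zero.2 hn.ne'
  have hpi := Real.pi_ne_zero
  set z : ℂ := Complex.exp ((2 * Real.pi * m / n : ℝ) * Complex.I) with hz
  have hterm : ∀ l : ℕ, Complex.exp ((2 * Real.pi * m * l / n : ℝ) * Complex.I) = z ^ l := by
    intro l
    rw [hz, ← Complex.exp_nat_mul]
    congr 1
    push_cast
    ring
  have hzn : z ^ n = 1 := by
    rw [hz, ← Complex.exp_nat_mul]
    have h : (n : ℂ) * (((2 * Real.pi * m / n : ℝ) : ℂ) * Complex.I) = m * (2 * Real.pi * Complex.I) := by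
      push_cast
      field_simp
    rw [h, Complex.exp_int_mul_two_pi_mul_I]
  simp only [hterm]
  by_cases hd : (n : ℤ) ∣ m
  · obtain ⟨t, ht⟩ := hd
    have hz1 : z = 1 := by
      rw [hz]
      have h : ((2 * Real.pi * m / n : ℝ) : ℂ) * Complex.I = t * (2 * Real.pi * Complex.I) := by
        rw [ht]
        push_cast
        field_simp
      rw [h, Complex.exp_int_mul_two_pi_mul_I]
    rw [if_pos ⟨t, ht⟩]
    simp [hz1]
  · have hz1 : z ≠ 1 := by
      intro h
      rw [hz, Complex.exp_eq_one_iff] at h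
      obtain ⟨k, hk⟩ := h
      apply hd
      refine ⟨k, ?_⟩
      have hk' : ((2 * Real.pi * m / n : ℝ) : ℂ) = ((2 * Real.pi * k : ℝ) : ℂ) := by
        have hI := Complex.I_ne_zero
        push_cast at hk ⊢
        have := mul_right_cancel₀ hI (by linear_combination hk : (2 * (Real.pi:ℂ) * m / n) * Complex.I = (2 * Real.pi * k) * Complex.I)
        linear_combination this
      have hkr : 2 * Real.pi * (m : ℝ) / n = 2 * Real.pi * k := by exact_mod_cast hk'
      have h2 : (m : ℝ) = (n : ℝ) * k := by
        field_simp at hkr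
        nlinarith [hkr, Real.pi_pos]
      exact_mod_cast h2
    rw [geom_sum_eq hz1, hzn]
    simp [hd]

lemma cos_sum (n : ℕ) (hn : 0 < n) (m : ℤ) :
    ∑ l ∈ Finset.range n, Real.cos (2 * Real.pi * m * l / n) =
      if (n : ℤ) ∣ m then (n : ℝ) else 0 := by
  have h := congrArg Complex.re (exp_sum n hn m)
  rw [Complex.re_sum] at h
  simp only [Complex.exp_ofReal_mul_I_re] at h
  convert h using 1
  split <;> simp

lemma sin_sum (n : ℕ) (hn : 0 < n) (m : ℤ) :
    ∑ l ∈ Finset.range n, Real.sin (2 * Real.pi * m * l / n) = 0 := by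
  have h := congrArg Complex.im (exp_sum n hn m)
  rw [Complex.im_sum] at h
  simp only [Complex.exp_ofReal_mul_I_im] at h
  convert h using 1
  split <;> simp

/-- angle -/
def A (n : ℕ) (m : ℤ) (t : ℕ) : ℝ := 2 * Real.pi * m * t / n

lemma A_zero (n : ℕ) (m : ℤ) : A n m 0 = 0 := by simp [A]

lemma A_sub (n : ℕ) (a b : ℤ) (t : ℕ) : A n a t - A n b t = A n (a - b) t := by
  unfold A; push_cast; ring

lemma A_add (n : ℕ) (a b : ℤ) (t : ℕ) : A n a t + A n b t = A n (a + b) t := by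
  unfold A; push_cast; ring

lemma sum_c (n : ℕ) (hn : 0 < n) (a : ℤ) :
    ∑ t ∈ range n, Real.cos (A n a t) = if (n : ℤ) ∣ a then (n : ℝ) else 0 := cos_sum n hn a

lemma sum_s (n : ℕ) (hn : 0 < n) (a : ℤ) :
    ∑ t ∈ range n, Real.sin (A n a t) = 0 := sin_sum n hn a

lemma sum_cc (n : ℕ) (hn : 0 < n) (a b : ℤ) :
    ∑ t ∈ range n, Real.cos (A n a t) * Real.cos (A n b t) =
      ((if (n : ℤ) ∣ (a - b) then (n : ℝ) else 0) + (if (n : ℤ) ∣ (a + b) then (n : ℝ) else 0)) / 2 := by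
  have h : ∀ t ∈ range n, Real.cos (A n a t) * Real.cos (A n b t)
      = (Real.cos (A n (a - b) t) + Real.cos (A n (a + b) t)) / 2 := by
    intro t _
    rw [← A_sub, ← A_add, Real.cos_sub, Real.cos_add]
    ring
  rw [Finset.sum_congr rfl h, ← Finset.sum_div, Finset.sum_add_distrib,
    sum_c n hn, sum_c n hn]

lemma sum_sc (n : ℕ) (hn : 0 < n) (a b : ℤ) :
    ∑ t ∈ range n, Real.sin (A n a t) * Real.cos (A n b t) = 0 := by
  have h : ∀ t ∈ range n, Real.sin (A n a t) * Real.cos (A n b t)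
      = (Real.sin (A n (a + b) t) + Real.sin (A n (a - b) t)) / 2 := by
    intro t _
    rw [← A_sub, ← A_add, Real.sin_sub, Real.sin_add]
    ring
  rw [Finset.sum_congr rfl h, ← Finset.sum_div, Finset.sum_add_distrib,
    sum_s n hn, sum_s n hn]
  norm_num

lemma sum_ss (n : ℕ) (hn : 0 < n) (a b : ℤ) :
    ∑ t ∈ range n, Real.sin (A n a t) * Real.sin (A n b t) =
      ((if (n : ℤ) ∣ (a - b) then (n : ℝ) else 0) - (if (n : ℤ) ∣ (a + b) then (n : ℝ) else 0)) / 2 := by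
  have h : ∀ t ∈ range n, Real.sin (A n a t) * Real.sin (A n b t)
      = (Real.cos (A n (a - b) t) - Real.cos (A n (a + b) t)) / 2 := by
    intro t _
    rw [← A_sub, ← A_add, Real.cos_sub, Real.cos_add]
    ring
  rw [Finset.sum_congr rfl h, ← Finset.sum_div, Finset.sum_sub_distrib,
    sum_c n hn, sum_c n hn]

lemma dvd_sub_iff (n : ℕ) {a b : ℕ} (ha : a < n) (hb : b < n) :
    (n : ℤ) ∣ ((a : ℤ) - b) ↔ a = b := by
  constructor
  · intro h
    have h0 : ((a : ℤ) - b) = 0 := by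
      refine Int.eq_zero_of_abs_lt_dvd h ?_
      rw [abs_lt]
      omega
    omega
  · rintro rfl; simp

lemma dvd_add_iff (n : ℕ) {a b : ℕ} (ha : 0 < a) (hab : a + b ≤ n) :
    (n : ℤ) ∣ ((a : ℤ) + b) ↔ a + b = n := by
  have hcast : (a : ℤ) + b = ((a + b : ℕ) : ℤ) := by push_cast; ring
  rw [hcast, Int.natCast_dvd_natCast]
  constructor
  · intro h
    exact Nat.le_antisymm hab (Nat.le_of_dvd (by omega) h)
  · rintro rfl; exact dvd_rfl

lemma not_dvd (n a : ℕ) (h1 : 0 < a) (h2 : a < n) : ¬ (n : ℤ) ∣ (a : ℤ) := by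
  rw [Int.natCast_dvd_natCast]
  intro h
  exact absurd (Nat.le_of_dvd h1 h) (not_le.2 h2)

def Pm (n : ℕ) : Matrix (Fin (n-1)) (Fin (n-1)) ℝ :=
  Matrix.of fun i j =>
    if (j : ℕ) % 2 = 0 then Real.cos (A n (((j:ℕ)/2+1 : ℕ)) (((i:ℕ)+1))) - 1
    else -Real.sin (A n (((j:ℕ)/2+1 : ℕ)) (((i:ℕ)+1)))

def Qm (n : ℕ) : Matrix (Fin (n-1)) (Fin (n-1)) ℝ :=
  Matrix.of fun i j =>
    if (i : ℕ) % 2 = 0 then Real.cos (A n (((i:ℕ)/2+1 : ℕ)) (((j:ℕ)+1)))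
    else -Real.sin (A n (((i:ℕ)/2+1 : ℕ)) (((j:ℕ)+1)))

def dvec (n : ℕ) (i : Fin (n-1)) : ℝ := if 2*((i:ℕ)/2+1) = n then (n:ℝ) else (n:ℝ)/2

lemma range_shift (n : ℕ) (hn : 3 ≤ n) (f : ℕ → ℝ) :
    ∑ l ∈ range (n-1), f (l+1) = (∑ t ∈ range n, f t) - f 0 := by
  have h := Finset.sum_range_succ' f (n-1)
  rw [show n-1+1 = n from by omega] at h
  linarith [h]


lemma Qm_even {n : ℕ} (i l : Fin (n-1)) (hi2 : (i:ℕ) % 2 = 0) :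
    Qm n i l = Real.cos (A n (((i:ℕ)/2+1 : ℕ)) (((l:ℕ)+1))) := by
  simp only [Qm, Matrix.of_apply, if_pos hi2]

lemma Qm_odd {n : ℕ} (i l : Fin (n-1)) (hi2 : ¬((i:ℕ) % 2 = 0)) :
    Qm n i l = -Real.sin (A n (((i:ℕ)/2+1 : ℕ)) (((l:ℕ)+1))) := by
  simp only [Qm, Matrix.of_apply, if_neg hi2]

lemma Pm_even {n : ℕ} (l j : Fin (n-1)) (hj2 : (j:ℕ) % 2 = 0) :
    Pm n l j = Real.cos (A n (((j:ℕ)/2+1 : ℕ)) (((l:ℕ)+1))) - 1 := by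
  simp only [Pm, Matrix.of_apply, if_pos hj2]

lemma Pm_odd {n : ℕ} (l j : Fin (n-1)) (hj2 : ¬((j:ℕ) % 2 = 0)) :
    Pm n l j = -Real.sin (A n (((j:ℕ)/2+1 : ℕ)) (((l:ℕ)+1))) := by
  simp only [Pm, Matrix.of_apply, if_neg hj2]

theorem QP (n : ℕ) (hn : 3 ≤ n) : Qm n * Pm n = Matrix.diagonal (dvec n) := by
  have hn0 : 0 < n := by omega
  ext i j
  rw [Matrix.mul_apply]
  have hiN : (i:ℕ) < n - 1 := i.isLt
  have hjN : (j:ℕ) < n - 1 := j.isLt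
  have hklt : (i:ℕ)/2+1 < n := by omega
  have hk'lt : (j:ℕ)/2+1 < n := by omega
  have hkpos : 0 < (i:ℕ)/2+1 := by omega
  have hk'pos : 0 < (j:ℕ)/2+1 := by omega
  rw [Matrix.diagonal_apply]
  rcases Nat.even_or_odd (i : ℕ) with hi | hi <;> rcases Nat.even_or_odd (j : ℕ) with hj | hj
  · -- even, even
    have hi2 : (i:ℕ) % 2 = 0 := Nat.even_iff.1 hi
    have hj2 : (j:ℕ) % 2 = 0 := Nat.even_iff.1 hj
    have hkn : 2*((i:ℕ)/2+1) ≤ n := by omega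
    have hk'n : 2*((j:ℕ)/2+1) ≤ n := by omega
    have e1 : ∑ l : Fin (n-1), Qm n i l * Pm n l j
        = ∑ l ∈ range (n-1), (fun t => Real.cos (A n (((i:ℕ)/2+1 : ℕ)) t) * (Real.cos (A n (((j:ℕ)/2+1 : ℕ)) t) - 1)) (l+1) := by
      rw [← Fin.sum_univ_eq_sum_range]
      exact Finset.sum_congr rfl fun l _ => by rw [Qm_even i l hi2, Pm_even l j hj2]
    rw [e1, range_shift n hn (fun t => Real.cos (A n (((i:ℕ)/2+1 : ℕ)) t) * (Real.cos (A n (((j:ℕ)/2+1 : ℕ)) t) - 1))]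
    have e2 : ∀ t ∈ range n, Real.cos (A n (((i:ℕ)/2+1 : ℕ)) t) * (Real.cos (A n (((j:ℕ)/2+1 : ℕ)) t) - 1)
        = Real.cos (A n (((i:ℕ)/2+1 : ℕ)) t) * Real.cos (A n (((j:ℕ)/2+1 : ℕ)) t) - Real.cos (A n (((i:ℕ)/2+1 : ℕ)) t) := fun t _ => by ring
    rw [Finset.sum_congr rfl e2, Finset.sum_sub_distrib, sum_cc n hn0, sum_c n hn0, A_zero, A_zero,
      if_neg (not_dvd n _ hkpos hklt)]
    simp only [dvd_sub_iff n hklt hk'lt, dvd_add_iff n hkpos (by omega : (i:ℕ)/2+1 + ((j:ℕ)/2+1) ≤ n)]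
    norm_num
    by_cases hkk : (i:ℕ)/2 = (j:ℕ)/2
    · have hij : i = j := Fin.ext (by omega)
      rw [if_pos hkk, if_pos hij]
      unfold dvec
      by_cases h2k : 2*((i:ℕ)/2+1) = n
      · rw [if_pos (by omega), if_pos h2k]
        ring
      · rw [if_neg (by omega), if_neg h2k]
        ring
    · have hij : i ≠ j := fun h => hkk (by rw [h])
      rw [if_neg hkk, if_neg (show ¬((i:ℕ)/2+1 + ((j:ℕ)/2+1) = n) from by omega), if_neg hij]
      norm_num
  · -- even, odd
    have hi2 : (i:ℕ) % 2 = 0 := Nat.even_iff.1 hi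
    have hj2 : ¬((j:ℕ) % 2 = 0) := by rw [Nat.odd_iff] at hj; omega
    have hij : i ≠ j := fun h => hj2 (by rw [← h]; exact hi2)
    have e1 : ∑ l : Fin (n-1), Qm n i l * Pm n l j
        = ∑ l ∈ range (n-1), (fun t => -(Real.sin (A n (((j:ℕ)/2+1 : ℕ)) t) * Real.cos (A n (((i:ℕ)/2+1 : ℕ)) t))) (l+1) := by
      rw [← Fin.sum_univ_eq_sum_range]
      exact Finset.sum_congr rfl fun l _ => by rw [Qm_even i l hi2, Pm_odd l j hj2]; ring
    rw [e1, range_shift n hn (fun t => -(Real.sin (A n (((j:ℕ)/2+1 : ℕ)) t) * Real.cos (A n (((i:ℕ)/2+1 : ℕ)) t))),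
      A_zero, A_zero, Finset.sum_neg_distrib, sum_sc n hn0, if_neg hij]
    norm_num
  · -- odd, even
    have hi2 : ¬((i:ℕ) % 2 = 0) := by rw [Nat.odd_iff] at hi; omega
    have hj2 : (j:ℕ) % 2 = 0 := Nat.even_iff.1 hj
    have hij : i ≠ j := fun h => hi2 (by rw [h]; exact hj2)
    have e1 : ∑ l : Fin (n-1), Qm n i l * Pm n l j
        = ∑ l ∈ range (n-1), (fun t => -(Real.sin (A n (((i:ℕ)/2+1 : ℕ)) t) * Real.cos (A n (((j:ℕ)/2+1 : ℕ)) t)) + Real.sin (A n (((i:ℕ)/2+1 : ℕ)) t)) (l+1) := by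
      rw [← Fin.sum_univ_eq_sum_range]
      exact Finset.sum_congr rfl fun l _ => by rw [Qm_odd i l hi2, Pm_even l j hj2]; ring
    rw [e1, range_shift n hn (fun t => -(Real.sin (A n (((i:ℕ)/2+1 : ℕ)) t) * Real.cos (A n (((j:ℕ)/2+1 : ℕ)) t)) + Real.sin (A n (((i:ℕ)/2+1 : ℕ)) t)),
      A_zero, Finset.sum_add_distrib, Finset.sum_neg_distrib, sum_sc n hn0, sum_s n hn0,
      if_neg hij]
    norm_num
  · -- odd, odd
    have hi2 : ¬((i:ℕ) % 2 = 0) := by rw [Nat.odd_iff] at hi; omega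
    have hj2 : ¬((j:ℕ) % 2 = 0) := by rw [Nat.odd_iff] at hj; omega
    have hkn' : 2*((i:ℕ)/2+1) < n := by omega
    have hk'n' : 2*((j:ℕ)/2+1) < n := by omega
    have e1 : ∑ l : Fin (n-1), Qm n i l * Pm n l j
        = ∑ l ∈ range (n-1), (fun t => Real.sin (A n (((i:ℕ)/2+1 : ℕ)) t) * Real.sin (A n (((j:ℕ)/2+1 : ℕ)) t)) (l+1) := by
      rw [← Fin.sum_univ_eq_sum_range]
      exact Finset.sum_congr rfl fun l _ => by rw [Qm_odd i l hi2, Pm_odd l j hj2]; ring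
    rw [e1, range_shift n hn (fun t => Real.sin (A n (((i:ℕ)/2+1 : ℕ)) t) * Real.sin (A n (((j:ℕ)/2+1 : ℕ)) t)),
      A_zero, sum_ss n hn0]
    simp only [dvd_sub_iff n hklt hk'lt, dvd_add_iff n hkpos (by omega : (i:ℕ)/2+1 + ((j:ℕ)/2+1) ≤ n)]
    rw [if_neg (show ¬((i:ℕ)/2+1 + ((j:ℕ)/2+1) = n) from by omega)]
    norm_num
    by_cases hkk : (i:ℕ)/2 = (j:ℕ)/2
    · have hij : i = j := Fin.ext (by omega)
      rw [if_pos hkk, if_pos hij]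
      unfold dvec
      rw [if_neg (by omega)]
    · have hij : i ≠ j := fun h => hkk (by rw [h])
      rw [if_neg hkk, if_neg hij]
      norm_num

/-- the angle of block `b` -/
def th (n : ℕ) (b : ℕ) : ℝ := 2 * Real.pi * ((b : ℝ) + 1) / n

lemma th_eq_A (n b : ℕ) : th n b = A n ((b + 1 : ℕ)) 1 := by
  unfold th A; push_cast; ring

section entries
variable {n : ℕ} (i l : Fin (n-1))

lemma R_even_self (hi : (i:ℕ) % 2 = 0) (h2 : (i:ℕ)+1 < n-1) :
    Rmat n i i = Real.cos (th n ((i:ℕ)/2)) := by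
  simp only [Rmat, Matrix.of_apply, th, if_pos hi, if_pos h2]
  simp

lemma R_even_succ (hi : (i:ℕ) % 2 = 0) (h2 : (i:ℕ)+1 < n-1) (hl : (l:ℕ) = (i:ℕ)+1) :
    Rmat n i l = -Real.sin (th n ((i:ℕ)/2)) := by
  simp only [Rmat, Matrix.of_apply, th, if_pos hi, if_pos h2]
  rw [if_neg (by omega), if_pos hl]

lemma R_even_last (hi : (i:ℕ) % 2 = 0) (h2 : ¬((i:ℕ)+1 < n-1)) :
    Rmat n i i = -1 := by
  simp only [Rmat, Matrix.of_apply, if_pos hi, if_neg h2]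
  simp

lemma R_odd_self (hi : ¬((i:ℕ) % 2 = 0)) :
    Rmat n i i = Real.cos (th n ((i:ℕ)/2)) := by
  simp only [Rmat, Matrix.of_apply, th, if_neg hi]
  rw [if_neg (by omega)]
  simp

lemma R_odd_pred (hi : ¬((i:ℕ) % 2 = 0)) (hl : (l:ℕ) = (i:ℕ)-1) :
    Rmat n i l = Real.sin (th n ((i:ℕ)/2)) := by
  simp only [Rmat, Matrix.of_apply, th, if_neg hi]
  rw [if_pos hl]

lemma R_zero
    (h1 : ¬((l:ℕ) = (i:ℕ)))
    (h2 : ¬((i:ℕ) % 2 = 0 ∧ (l:ℕ) = (i:ℕ)+1))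
    (h3 : ¬(¬((i:ℕ) % 2 = 0) ∧ (l:ℕ) = (i:ℕ)-1)) :
    Rmat n i l = 0 := by
  simp only [Rmat, Matrix.of_apply]
  split_ifs with p1 p2 p3 p4 p5 p6 p7 <;> first
    | rfl
    | (exfalso; first
        | exact h1 p3
        | exact h2 ⟨p1, p4⟩
        | exact h3 ⟨p1, p6⟩
        | omega)

end entries

lemma A_add_one (n : ℕ) (m : ℤ) (t : ℕ) : A n m (t+1) = A n m t + A n m 1 := by
  unfold A; push_cast; ring

lemma A_self (n : ℕ) (hn : 0 < n) (m : ℤ) : A n m n = m * (2 * Real.pi) := by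
  unfold A
  have : (n:ℝ) ≠ 0 := Nat.cast_ne_zero.2 hn.ne'
  field_simp

lemma cos_A_self (n : ℕ) (hn : 0 < n) (m : ℤ) : Real.cos (A n m n) = 1 := by
  rw [A_self n hn m, Real.cos_int_mul_two_pi]

lemma sin_A_self (n : ℕ) (hn : 0 < n) (m : ℤ) : Real.sin (A n m n) = 0 := by
  rw [A_self n hn m, show ((m:ℝ) * (2 * Real.pi)) = (2*m : ℤ) * Real.pi by push_cast; ring,
    Real.sin_int_mul_pi]

lemma A_one_pi (n : ℕ) (hn : 0 < n) (k : ℕ) (h : 2 * k = n) : A n k 1 = Real.pi := by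
  unfold A
  have h' : (n:ℝ) = 2 * k := by exact_mod_cast h.symm
  have hk : (k:ℝ) ≠ 0 := by
    have : 0 < k := by omega
    exact Nat.cast_ne_zero.2 this.ne'
  rw [h']
  push_cast
  field_simp

lemma sum_one {N : ℕ} (f : Fin N → ℝ) (a : Fin N) (h : ∀ l, l ≠ a → f l = 0) :
    ∑ l, f l = f a :=
  Finset.sum_eq_single_of_mem a (mem_univ a) (fun b _ hb => h b hb)

lemma sum_two {N : ℕ} (f : Fin N → ℝ) (a b : Fin N) (hab : a ≠ b)
    (h : ∀ l, l ≠ a → l ≠ b → f l = 0) : ∑ l, f l = f a + f b := by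
  rw [← Finset.sum_pair hab]
  refine (Finset.sum_subset (Finset.subset_univ {a, b}) ?_).symm
  intro x _ hx
  simp only [Finset.mem_insert, Finset.mem_singleton, not_or] at hx
  exact h x hx.1 hx.2

lemma M_mul_apply (n : ℕ) (hn : 3 ≤ n) (B : Matrix (Fin (n-1)) (Fin (n-1)) ℝ) (i j : Fin (n-1)) :
    (Mmat n * B) i j =
      (if h : (i:ℕ)+1 < n-1 then B ⟨(i:ℕ)+1, h⟩ j else 0) - B ⟨0, by omega⟩ j := by
  rw [Matrix.mul_apply]
  simp only [Mmat, Matrix.of_apply, sub_mul, ite_mul, one_mul, zero_mul]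
  rw [Finset.sum_sub_distrib]
  congr 1
  · split
    next h =>
      rw [sum_one (fun l => if (l:ℕ) = (i:ℕ)+1 then B l j else 0) ⟨(i:ℕ)+1, h⟩]
      · rw [if_pos rfl]
      · intro l hl
        rw [if_neg]
        intro hval
        exact hl (Fin.ext hval)
    next h =>
      apply Finset.sum_eq_zero
      intro l _
      rw [if_neg]
      have := l.isLt
      omega
  · rw [sum_one (fun l => if (l:ℕ) = 0 then B l j else 0) ⟨0, by omega⟩]
    · rw [if_pos rfl]
    · intro l hl
      rw [if_neg]
      intro hval
      exact hl (Fin.ext hval)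

lemma A_last (n : ℕ) (hn : 3 ≤ n) (m : ℤ) :
    A n m (n-1) = A n m n - A n m 1 := by
  have h := A_add_one n m (n-1)
  rw [show (n-1)+1 = n from by omega] at h
  linarith

theorem MP_PR (n : ℕ) (hn : 3 ≤ n) : Mmat n * Pm n = Pm n * Rmat n := by
  have hn0 : 0 < n := by omega
  ext i j
  rw [M_mul_apply n hn, Matrix.mul_apply]
  have hjN : (j:ℕ) < n-1 := j.isLt
  have hiN : (i:ℕ) < n-1 := i.isLt
  rcases Nat.even_or_odd (j:ℕ) with hj | hj
  · have hj2 : (j:ℕ) % 2 = 0 := Nat.even_iff.1 hj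
    by_cases hJ : (j:ℕ)+1 < n-1
    · -- generic even column
      have hsum : ∑ l, Pm n i l * Rmat n l j
          = Pm n i j * Rmat n j j + Pm n i ⟨(j:ℕ)+1, hJ⟩ * Rmat n ⟨(j:ℕ)+1, hJ⟩ j := by
        apply sum_two _ j ⟨(j:ℕ)+1, hJ⟩ (Fin.ne_of_val_ne (by simp))
        intro l hl1 hl2
        have hv1 : (l:ℕ) ≠ (j:ℕ) := fun h => hl1 (Fin.ext h)
        have hv2 : (l:ℕ) ≠ (j:ℕ)+1 := fun h => hl2 (Fin.ext h)
        rw [R_zero l j (by omega) (by omega) (by omega), mul_zero]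
      rw [hsum, R_even_self j hj2 hJ,
        R_odd_pred ⟨(j:ℕ)+1, hJ⟩ j (by simp [Nat.add_mod]; omega) (by simp),
        Pm_even i j hj2, Pm_odd i ⟨(j:ℕ)+1, hJ⟩ (by simp [Nat.add_mod]; omega)]
      rw [show ((⟨(j:ℕ)+1, hJ⟩ : Fin (n-1)) : ℕ) = (j:ℕ)+1 from rfl,
        show ((j:ℕ)+1)/2 = (j:ℕ)/2 from by omega, th_eq_A]
      rw [Pm_even ⟨0, by omega⟩ j hj2, show ((⟨0, by omega⟩ : Fin (n-1)) : ℕ) = 0 from rfl,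
        show ((0:ℕ)+1) = 1 from rfl]
      split
      next h =>
        rw [Pm_even ⟨(i:ℕ)+1, h⟩ j hj2, show ((⟨(i:ℕ)+1, h⟩ : Fin (n-1)) : ℕ) = (i:ℕ)+1 from rfl,
          A_add_one n _ ((i:ℕ)+1), Real.cos_add]
        ring
      next h =>
        rw [show (i:ℕ)+1 = n-1 from by omega, A_last n hn, Real.cos_sub, Real.sin_sub,
          cos_A_self n hn0, sin_A_self n hn0]
        linear_combination -Real.sin_sq_add_cos_sq (A n (((j:ℕ)/2+1 : ℕ)) 1)
    · -- last even column (n even)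
      have h2k : 2*((j:ℕ)/2+1) = n := by omega
      have hA1c : Real.cos (A n (((j:ℕ)/2+1 : ℕ)) 1) = -1 := by
        rw [A_one_pi n hn0 _ h2k]; exact Real.cos_pi
      have hA1s : Real.sin (A n (((j:ℕ)/2+1 : ℕ)) 1) = 0 := by
        rw [A_one_pi n hn0 _ h2k]; exact Real.sin_pi
      have hsum : ∑ l, Pm n i l * Rmat n l j = Pm n i j * Rmat n j j := by
        apply sum_one
        intro l hl1
        have hv1 : (l:ℕ) ≠ (j:ℕ) := fun h => hl1 (Fin.ext h)
        have hlN : (l:ℕ) < n-1 := l.isLt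
        rw [R_zero l j (by omega) (by omega) (by omega), mul_zero]
      rw [hsum, R_even_last j hj2 hJ, Pm_even i j hj2,
        Pm_even ⟨0, by omega⟩ j hj2, show ((⟨0, by omega⟩ : Fin (n-1)) : ℕ) = 0 from rfl,
        show ((0:ℕ)+1) = 1 from rfl, hA1c]
      split
      next h =>
        rw [Pm_even ⟨(i:ℕ)+1, h⟩ j hj2, show ((⟨(i:ℕ)+1, h⟩ : Fin (n-1)) : ℕ) = (i:ℕ)+1 from rfl,
          A_add_one n _ ((i:ℕ)+1), Real.cos_add, hA1c, hA1s]
        ring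
      next h =>
        rw [show (i:ℕ)+1 = n-1 from by omega, A_last n hn, Real.cos_sub,
          cos_A_self n hn0, sin_A_self n hn0, hA1c, hA1s]
        ring
  · -- odd column
    have hj2 : ¬((j:ℕ) % 2 = 0) := by rw [Nat.odd_iff] at hj; omega
    have hj1 : 1 ≤ (j:ℕ) := by omega
    have haJ : (j:ℕ)-1 < n-1 := by omega
    have hsum : ∑ l, Pm n i l * Rmat n l j
        = Pm n i ⟨(j:ℕ)-1, haJ⟩ * Rmat n ⟨(j:ℕ)-1, haJ⟩ j + Pm n i j * Rmat n j j := by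
      apply sum_two _ ⟨(j:ℕ)-1, haJ⟩ j (Fin.ne_of_val_ne (by simp; omega))
      intro l hl1 hl2
      have hv1 : (l:ℕ) ≠ (j:ℕ)-1 := fun h => hl1 (Fin.ext h)
      have hv2 : (l:ℕ) ≠ (j:ℕ) := fun h => hl2 (Fin.ext h)
      rw [R_zero l j (by omega) (by omega) (by omega), mul_zero]
    rw [hsum, R_odd_self j hj2,
      R_even_succ ⟨(j:ℕ)-1, haJ⟩ j (by simp; omega) (by simp; omega) (by simp; omega),
      Pm_even i ⟨(j:ℕ)-1, haJ⟩ (by simp; omega), Pm_odd i j hj2,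
      show ((⟨(j:ℕ)-1, haJ⟩ : Fin (n-1)) : ℕ) = (j:ℕ)-1 from rfl,
      show ((j:ℕ)-1)/2 = (j:ℕ)/2 from by omega, th_eq_A,
      Pm_odd ⟨0, by omega⟩ j hj2, show ((⟨0, by omega⟩ : Fin (n-1)) : ℕ) = 0 from rfl,
      show ((0:ℕ)+1) = 1 from rfl]
    split
    next h =>
      rw [Pm_odd ⟨(i:ℕ)+1, h⟩ j hj2, show ((⟨(i:ℕ)+1, h⟩ : Fin (n-1)) : ℕ) = (i:ℕ)+1 from rfl,
        A_add_one n _ ((i:ℕ)+1), Real.sin_add]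
      ring
    next h =>
      rw [show (i:ℕ)+1 = n-1 from by omega, A_last n hn, Real.cos_sub, Real.sin_sub,
        cos_A_self n hn0, sin_A_self n hn0]
      ring

theorem RRt (n : ℕ) (hn : 3 ≤ n) : Rmat n * (Rmat n).transpose = 1 := by
  ext i i'
  rw [Matrix.mul_apply]
  simp only [Matrix.transpose_apply]
  have hiN : (i:ℕ) < n-1 := i.isLt
  have hi'N : (i':ℕ) < n-1 := i'.isLt
  by_cases hii : i = i'
  · subst hii
    rw [Matrix.one_apply_eq]
    rcases Nat.even_or_odd (i:ℕ) with hi | hi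
    · have hi2 : (i:ℕ) % 2 = 0 := Nat.even_iff.1 hi
      by_cases hI : (i:ℕ)+1 < n-1
      · rw [sum_two (fun l => Rmat n i l * Rmat n i l) i ⟨(i:ℕ)+1, hI⟩
            (Fin.ne_of_val_ne (by simp)) ?_]
        · rw [R_even_self i hi2 hI, R_even_succ i ⟨(i:ℕ)+1, hI⟩ hi2 hI rfl]
          linear_combination Real.sin_sq_add_cos_sq (th n ((i:ℕ)/2))
        · intro l hl1 hl2
          have hv1 : (l:ℕ) ≠ (i:ℕ) := fun h => hl1 (Fin.ext h)
          have hv2 : (l:ℕ) ≠ (i:ℕ)+1 := fun h => hl2 (Fin.ext h)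
          simp only [R_zero i l (by omega) (by omega) (by omega), zero_mul, mul_zero]
      · rw [sum_one (fun l => Rmat n i l * Rmat n i l) i ?_]
        · rw [R_even_last i hi2 hI]; norm_num
        · intro l hl1
          have hv1 : (l:ℕ) ≠ (i:ℕ) := fun h => hl1 (Fin.ext h)
          have hlN : (l:ℕ) < n-1 := l.isLt
          simp only [R_zero i l (by omega) (by omega) (by omega), zero_mul, mul_zero]
    · have hi2 : ¬((i:ℕ) % 2 = 0) := by rw [Nat.odd_iff] at hi; omega
      rw [sum_two (fun l => Rmat n i l * Rmat n i l) ⟨(i:ℕ)-1, by omega⟩ i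
          (Fin.ne_of_val_ne (by simp; omega)) ?_]
      · rw [R_odd_pred i ⟨(i:ℕ)-1, by omega⟩ hi2 rfl, R_odd_self i hi2]
        linear_combination Real.sin_sq_add_cos_sq (th n ((i:ℕ)/2))
      · intro l hl1 hl2
        have hv1 : (l:ℕ) ≠ (i:ℕ)-1 := fun h => hl1 (Fin.ext h)
        have hv2 : (l:ℕ) ≠ (i:ℕ) := fun h => hl2 (Fin.ext h)
        simp only [R_zero i l (by omega) (by omega) (by omega), zero_mul, mul_zero]
  · rw [Matrix.one_apply_ne hii]
    have hvv : (i:ℕ) ≠ (i':ℕ) := fun h => hii (Fin.ext h)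
    by_cases h1 : (i:ℕ) % 2 = 0 ∧ (i':ℕ) = (i:ℕ)+1
    · -- i even, i' = i+1
      have hI : (i:ℕ)+1 < n-1 := by omega
      rw [sum_two (fun l => Rmat n i l * Rmat n i' l) i i' hii ?_]
      · rw [R_even_self i h1.1 hI, R_even_succ i i' h1.1 hI h1.2,
          R_odd_pred i' i (by omega) (by omega), R_odd_self i' (by omega),
          show (i':ℕ)/2 = (i:ℕ)/2 from by omega]
        ring
      · intro l hl1 hl2
        have hv1 : (l:ℕ) ≠ (i:ℕ) := fun h => hl1 (Fin.ext h)
        have hv2 : (l:ℕ) ≠ (i':ℕ) := fun h => hl2 (Fin.ext h)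
        simp only [R_zero i l (by omega) (by omega) (by omega), zero_mul, mul_zero]
    · by_cases h2 : (i':ℕ) % 2 = 0 ∧ (i:ℕ) = (i':ℕ)+1
      · have hI : (i':ℕ)+1 < n-1 := by omega
        rw [sum_two (fun l => Rmat n i l * Rmat n i' l) i' i (Ne.symm hii) ?_]
        · rw [R_odd_pred i i' (by omega) (by omega), R_odd_self i (by omega),
            R_even_self i' h2.1 hI, R_even_succ i' i h2.1 hI h2.2,
            show (i:ℕ)/2 = (i':ℕ)/2 from by omega]
          ring
        · intro l hl1 hl2
          have hv1 : (l:ℕ) ≠ (i':ℕ) := fun h => hl1 (Fin.ext h)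
          have hv2 : (l:ℕ) ≠ (i:ℕ) := fun h => hl2 (Fin.ext h)
          simp only [R_zero i l (by omega) (by omega) (by omega), zero_mul, mul_zero]
      · apply Finset.sum_eq_zero
        intro l _
        by_cases hz : ((l:ℕ) = (i:ℕ) ∨ ((i:ℕ) % 2 = 0 ∧ (l:ℕ) = (i:ℕ)+1)
            ∨ (¬((i:ℕ) % 2 = 0) ∧ (l:ℕ) = (i:ℕ)-1))
        · simp only [R_zero i' l (by omega) (by omega) (by omega), zero_mul, mul_zero]
        · simp only [R_zero i l (by omega) (by omega) (by omega), zero_mul, mul_zero]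

-- new material
lemma dvec_ne (n : ℕ) (hn : 3 ≤ n) (i : Fin (n-1)) : dvec n i ≠ 0 := by
  unfold dvec
  have h : (0:ℝ) < n := by exact_mod_cast (by omega : 0 < n)
  split
  · exact h.ne'
  · positivity

lemma BP (n : ℕ) (hn : 3 ≤ n) :
    (Matrix.diagonal (fun i => (dvec n i)⁻¹) * Qm n) * Pm n = 1 := by
  rw [Matrix.mul_assoc, QP n hn, Matrix.diagonal_mul_diagonal]
  ext i j
  rw [Matrix.diagonal_apply, Matrix.one_apply]
  by_cases h : i = j
  · rw [if_pos h, if_pos h, inv_mul_cancel₀ (dvec_ne n hn i)]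
  · rw [if_neg h, if_neg h]

lemma Pdet (n : ℕ) (hn : 3 ≤ n) : IsUnit (Pm n).det := by
  have := invertibleOfLeftInverse _ _ (BP n hn)
  exact Matrix.isUnit_det_of_invertible _

lemma Rdet (n : ℕ) (hn : 3 ≤ n) : IsUnit (Rmat n).det := by
  have := invertibleOfRightInverse _ _ (RRt n hn)
  exact Matrix.isUnit_det_of_invertible _

lemma PPinv (n : ℕ) (hn : 3 ≤ n) : Pm n * (Pm n)⁻¹ = 1 :=
  Matrix.mul_nonsing_inv _ (Pdet n hn)

lemma PinvP (n : ℕ) (hn : 3 ≤ n) : (Pm n)⁻¹ * Pm n = 1 :=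
  Matrix.nonsing_inv_mul _ (Pdet n hn)

lemma conjM (n : ℕ) (hn : 3 ≤ n) : Mmat n = Pm n * Rmat n * (Pm n)⁻¹ := by
  have h : Mmat n * (Pm n * (Pm n)⁻¹) = Pm n * Rmat n * (Pm n)⁻¹ := by
    rw [← Matrix.mul_assoc, MP_PR n hn]
  rw [PPinv n hn, mul_one] at h
  exact h

lemma conjN (n : ℕ) (hn : 3 ≤ n) (t : ℕ) :
    Mmat n ^ t = Pm n * Rmat n ^ t * (Pm n)⁻¹ := by
  induction t with
  | zero => rw [pow_zero, pow_zero, mul_one, PPinv n hn]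
  | succ t ih =>
    rw [pow_succ, ih, conjM n hn, pow_succ]
    simp only [Matrix.mul_assoc]
    rw [← Matrix.mul_assoc ((Pm n)⁻¹) (Pm n), PinvP n hn, one_mul]

lemma conjZ (n : ℕ) (hn : 3 ≤ n) (m : ℤ) :
    Mmat n ^ m = Pm n * Rmat n ^ m * (Pm n)⁻¹ := by
  cases m with
  | ofNat t => rw [Int.ofNat_eq_coe, zpow_natCast, zpow_natCast, conjN n hn]
  | negSucc t =>
    rw [zpow_negSucc, zpow_negSucc, conjN n hn]
    rw [Matrix.mul_inv_rev, Matrix.mul_inv_rev,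
      Matrix.nonsing_inv_nonsing_inv _ (Pdet n hn), Matrix.mul_assoc]

lemma orthN (n : ℕ) (hn : 3 ≤ n) (t : ℕ) :
    (Rmat n ^ t).transpose * (Rmat n ^ t) = 1 := by
  induction t with
  | zero => simp
  | succ t ih =>
    rw [pow_succ, Matrix.transpose_mul]
    calc (Rmat n).transpose * (Rmat n ^ t).transpose * (Rmat n ^ t * Rmat n)
        = (Rmat n).transpose * ((Rmat n ^ t).transpose * Rmat n ^ t * Rmat n) := by
          simp only [Matrix.mul_assoc]
      _ = 1 := by rw [ih, one_mul, mul_eq_one_comm.mp (RRt n hn)]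

lemma orthZ (n : ℕ) (hn : 3 ≤ n) (m : ℤ) :
    (Rmat n ^ m).transpose * (Rmat n ^ m) = 1 := by
  cases m with
  | ofNat t => rw [Int.ofNat_eq_coe, zpow_natCast, orthN n hn]
  | negSucc t =>
    rw [zpow_negSucc]
    have hA := orthN n hn (t+1)
    have hA' : Rmat n ^ (t+1) * (Rmat n ^ (t+1)).transpose = 1 :=
      mul_eq_one_comm.mpr hA
    rw [Matrix.inv_eq_right_inv hA', Matrix.transpose_transpose, hA']

lemma sq_sum_dot {N : ℕ} (v : Fin N → ℝ) :
    ∑ i, v i ^ 2 = dotProduct v v := by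
  simp [dotProduct, sq]

lemma S_pres {N : ℕ} (B : Matrix (Fin N) (Fin N) ℝ) (hB : B.transpose * B = 1)
    (w : Fin N → ℝ) : ∑ i, (B.mulVec w) i ^ 2 = ∑ i, w i ^ 2 := by
  rw [sq_sum_dot, sq_sum_dot, Matrix.dotProduct_mulVec, ← Matrix.mulVec_transpose,
    Matrix.mulVec_mulVec, hB, Matrix.one_mulVec]

-- small helpers
lemma S_nonneg {N : ℕ} (v : Fin N → ℝ) : 0 ≤ ∑ i, v i ^ 2 :=
  Finset.sum_nonneg fun i _ => sq_nonneg _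

lemma S_pos {N : ℕ} {v : Fin N → ℝ} (hv : v ≠ 0) : 0 < ∑ i, v i ^ 2 := by
  rcases (S_nonneg v).lt_or_eq with h | h
  · exact h
  · exfalso
    apply hv
    funext i
    have := (Finset.sum_eq_zero_iff_of_nonneg (fun i _ => sq_nonneg (v i))).mp h.symm
    have h2 := this i (Finset.mem_univ i)
    exact pow_eq_zero_iff (n := 2) (by norm_num) |>.mp h2

lemma S_smul {N : ℕ} (c : ℝ) (v : Fin N → ℝ) :
    ∑ i, (c • v) i ^ 2 = c ^ 2 * ∑ i, v i ^ 2 := by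
  simp [smul_eq_mul, mul_pow, Finset.mul_sum]

lemma P_Pinv_vec (n : ℕ) (hn : 3 ≤ n) (v : Fin (n-1) → ℝ) :
    (Pm n).mulVec ((Pm n)⁻¹.mulVec v) = v := by
  rw [Matrix.mulVec_mulVec, PPinv n hn, Matrix.one_mulVec]

lemma Pinv_P_vec (n : ℕ) (hn : 3 ≤ n) (v : Fin (n-1) → ℝ) :
    (Pm n)⁻¹.mulVec ((Pm n).mulVec v) = v := by
  rw [Matrix.mulVec_mulVec, PinvP n hn, Matrix.one_mulVec]

lemma Pinv_ne (n : ℕ) (hn : 3 ≤ n) {v : Fin (n-1) → ℝ} (hv : v ≠ 0) :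
    (Pm n)⁻¹.mulVec v ≠ 0 := by
  intro h
  apply hv
  rw [← P_Pinv_vec n hn v, h, Matrix.mulVec_zero]

lemma P_ne (n : ℕ) (hn : 3 ≤ n) {v : Fin (n-1) → ℝ} (hv : v ≠ 0) :
    (Pm n).mulVec v ≠ 0 := by
  intro h
  apply hv
  rw [← Pinv_P_vec n hn v, h, Matrix.mulVec_zero]

/-- the normalized image under `P⁻¹` -/
def fmap (n : ℕ) (hn : 3 ≤ n) (X : {v : Fin (n-1) → ℝ // v ≠ 0}) :
    {v : Fin (n-1) → ℝ // ∑ i, (v i) ^ 2 = 1} :=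
  ⟨(Real.sqrt (∑ i, ((Pm n)⁻¹.mulVec X.1) i ^ 2))⁻¹ • ((Pm n)⁻¹.mulVec X.1), by
    have hu : (Pm n)⁻¹.mulVec X.1 ≠ 0 := Pinv_ne n hn X.2
    have hS : 0 < ∑ i, ((Pm n)⁻¹.mulVec X.1) i ^ 2 := S_pos hu
    rw [S_smul, inv_pow, Real.sq_sqrt hS.le, inv_mul_cancel₀ hS.ne']⟩

def gmap (n : ℕ) (hn : 3 ≤ n) (u : {v : Fin (n-1) → ℝ // ∑ i, (v i) ^ 2 = 1}) :
    {v : Fin (n-1) → ℝ // v ≠ 0} :=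
  ⟨(Pm n).mulVec u.1, by
    apply P_ne n hn
    intro h
    have h2 := u.2
    rw [h] at h2
    simp at h2⟩

lemma Pinv_Mpow (n : ℕ) (hn : 3 ≤ n) (m : ℤ) (w : Fin (n-1) → ℝ) :
    (Pm n)⁻¹.mulVec ((Mmat n ^ m).mulVec w)
      = (Rmat n ^ m).mulVec ((Pm n)⁻¹.mulVec w) := by
  rw [Matrix.mulVec_mulVec, Matrix.mulVec_mulVec, conjZ n hn m]
  congr 1
  rw [← Matrix.mul_assoc, ← Matrix.mul_assoc, PinvP n hn, one_mul]

lemma P_Rpow (n : ℕ) (hn : 3 ≤ n) (m : ℤ) (w : Fin (n-1) → ℝ) :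
    (Pm n).mulVec ((Rmat n ^ m).mulVec w)
      = (Mmat n ^ m).mulVec ((Pm n).mulVec w) := by
  rw [Matrix.mulVec_mulVec, Matrix.mulVec_mulVec, conjZ n hn m]
  congr 1
  rw [Matrix.mul_assoc, Matrix.mul_assoc, PinvP n hn, mul_one]

lemma f_descend (n : ℕ) (hn : 3 ≤ n) (X Y : {v : Fin (n-1) → ℝ // v ≠ 0})
    (h : simRel n X Y) : apxRel n (fmap n hn X) (fmap n hn Y) := by
  obtain ⟨r, m, hr, hY⟩ := h
  set u : Fin (n-1) → ℝ := (Pm n)⁻¹.mulVec X.1 with hu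
  have hune : u ≠ 0 := Pinv_ne n hn X.2
  have hSu : 0 < ∑ i, u i ^ 2 := S_pos hune
  have hsq : Real.sqrt (∑ i, u i ^ 2) ≠ 0 := (Real.sqrt_pos.mpr hSu).ne'
  have h1 : (Pm n)⁻¹.mulVec Y.1 = r • (Rmat n ^ m).mulVec u := by
    rw [hY, Matrix.mulVec_smul, Pinv_Mpow n hn]
  have h2 : ∑ i, ((Pm n)⁻¹.mulVec Y.1) i ^ 2 = r ^ 2 * ∑ i, u i ^ 2 := by
    rw [h1, S_smul, S_pres _ (orthZ n hn m)]
  have h3 : Real.sqrt (∑ i, ((Pm n)⁻¹.mulVec Y.1) i ^ 2)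
      = |r| * Real.sqrt (∑ i, u i ^ 2) := by
    rw [h2, Real.sqrt_mul (sq_nonneg r), Real.sqrt_sq_eq_abs]
  refine ⟨m, if 0 < r then 1 else -1, by split <;> simp, ?_⟩
  show (fmap n hn Y).1 = _
  simp only [fmap]
  rw [h3, h1, ← hu, Matrix.mulVec_smul, smul_smul, smul_smul]
  congr 1
  rcases lt_or_gt_of_ne hr with hneg | hpos
  · rw [if_neg (by linarith), abs_of_neg hneg]
    field_simp
  · rw [if_pos hpos, abs_of_pos hpos]
    field_simp

lemma g_descend (n : ℕ) (hn : 3 ≤ n) (X Y : {v : Fin (n-1) → ℝ // ∑ i, (v i) ^ 2 = 1})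
    (h : apxRel n X Y) : simRel n (gmap n hn X) (gmap n hn Y) := by
  obtain ⟨m, ε, hε, hY⟩ := h
  refine ⟨ε, m, by rcases hε with h|h <;> rw [h] <;> norm_num, ?_⟩
  show (Pm n).mulVec Y.1 = _
  rw [hY, Matrix.mulVec_smul, P_Rpow n hn]
  rfl

lemma gf_rel (n : ℕ) (hn : 3 ≤ n) (X : {v : Fin (n-1) → ℝ // v ≠ 0}) :
    simRel n X (gmap n hn (fmap n hn X)) := by
  have hune : (Pm n)⁻¹.mulVec X.1 ≠ 0 := Pinv_ne n hn X.2
  have hSu : 0 < ∑ i, ((Pm n)⁻¹.mulVec X.1) i ^ 2 := S_pos hune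
  have hsq : (0:ℝ) < Real.sqrt (∑ i, ((Pm n)⁻¹.mulVec X.1) i ^ 2) := Real.sqrt_pos.mpr hSu
  refine ⟨(Real.sqrt (∑ i, ((Pm n)⁻¹.mulVec X.1) i ^ 2))⁻¹, 0, inv_ne_zero hsq.ne', ?_⟩
  show (Pm n).mulVec ((fmap n hn X).1) = _
  simp only [fmap]
  rw [Matrix.mulVec_smul, P_Pinv_vec n hn, zpow_zero, Matrix.one_mulVec]

lemma fg_eq (n : ℕ) (hn : 3 ≤ n) (u : {v : Fin (n-1) → ℝ // ∑ i, (v i) ^ 2 = 1}) :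
    fmap n hn (gmap n hn u) = u := by
  apply Subtype.ext
  simp only [fmap, gmap]
  rw [Pinv_P_vec n hn, u.2, Real.sqrt_one, inv_one, one_smul]

lemma f_cont (n : ℕ) (hn : 3 ≤ n) : Continuous (fmap n hn) := by
  have hmv : Continuous (fun v : Fin (n-1) → ℝ => (Pm n)⁻¹.mulVec v) := by
    have := (Matrix.mulVecLin ((Pm n)⁻¹)).continuous_of_finiteDimensional
    exact this
  have hsub : Continuous (fun X : {v : Fin (n-1) → ℝ // v ≠ 0} => (Pm n)⁻¹.mulVec X.1) :=
    hmv.comp continuous_subtype_val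
  have hS : Continuous (fun X : {v : Fin (n-1) → ℝ // v ≠ 0} =>
      ∑ i, ((Pm n)⁻¹.mulVec X.1) i ^ 2) := by
    apply continuous_finset_sum
    intro i _
    exact ((continuous_apply i).comp hsub).pow 2
  have hc : Continuous (fun X : {v : Fin (n-1) → ℝ // v ≠ 0} =>
      (Real.sqrt (∑ i, ((Pm n)⁻¹.mulVec X.1) i ^ 2))⁻¹) := by
    apply Continuous.inv₀ (Real.continuous_sqrt.comp hS)
    intro X
    exact (Real.sqrt_pos.mpr (S_pos (Pinv_ne n hn X.2))).ne'
  apply Continuous.subtype_mk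
  exact hc.smul hsub

lemma g_cont (n : ℕ) (hn : 3 ≤ n) : Continuous (gmap n hn) := by
  have hmv : Continuous (fun v : Fin (n-1) → ℝ => (Pm n).mulVec v) := by
    have := (Matrix.mulVecLin (Pm n)).continuous_of_finiteDimensional
    exact this
  exact Continuous.subtype_mk (hmv.comp continuous_subtype_val) _

/-- The quotient `(ℝ^{n-1}∖{0})/∼` (the space `𝓛(n)` of shapes of
`n`-segments without labelled vertices) is homeomorphic to `S^{n-2}/⟨ℛ_n, ν⟩`, where
`ν(X) = −X`. -/
theorem shapes_quotient_homeomorph (n : ℕ) (hn : 3 ≤ n) :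
    Nonempty (Quot (simRel n) ≃ₜ Quot (apxRel n)) := by
  refine ⟨?_⟩
  exact {
    toEquiv := {
      toFun := Quot.lift (fun X => Quot.mk (apxRel n) (fmap n hn X))
        (fun a b h => Quot.sound (f_descend n hn a b h))
      invFun := Quot.lift (fun u => Quot.mk (simRel n) (gmap n hn u))
        (fun a b h => Quot.sound (g_descend n hn a b h))
      left_inv := fun q => by
        induction q using Quot.ind with
        | _ X => exact (Quot.sound (gf_rel n hn X)).symm
      right_inv := fun q => by
        induction q using Quot.ind with
        | _ u => exact congrArg (Quot.mk (apxRel n)) (fg_eq n hn u) }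
    continuous_toFun := continuous_quot_lift _ ((continuous_quot_mk).comp (f_cont n hn))
    continuous_invFun := continuous_quot_lift _ ((continuous_quot_mk).comp (g_cont n hn)) }
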